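/- The constant 1/3 in the weighted Poincaré–Sobolev inequality is sharp: for every S < 1/3 there exist b > 0 and an H¹ function v on [b,b+1] with ∫_b^{b+1} v(r)·r dr = 0 such that max_{b ≤ r ≤ b+1} v(r)²·r > S · ∫_b^{b+1} v'(r)² · r dr. -/

import Mathlib

open MeasureTheory Set Filter Topology

/-!
For large `b` the weight `r` is almost constant on `[b, b + 1]`, so the problem approaches the
unweighted one on an interval of length one, whose extremal has `v' = r - b` (the Neumann Green
function for a point load at the right end). Taking
`v = (r - b)² / 2 - C` with `C` chosen to make `∫ v r dr = 0`, the ratio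
`v(b + 1)² (b + 1) / ∫ (r - b)² r dr` is an explicit rational function of `b` tending to `1 / 3`.
-/

/-- The constant is `∫_b^{b+1} (r - b)² r / 2 dr / ∫_b^{b+1} r dr`. -/
noncomputable def sharpProfile (b r : ℝ) : ℝ := (r - b) ^ 2 / 2 - (b / 6 + 1 / 8) / (b + 1 / 2)

lemma continuous_sharpProfile (b : ℝ) : Continuous (sharpProfile b) := by
  unfold sharpProfile; fun_prop

lemma sharpProfile_eq_add_integral (b x : ℝ) :
    sharpProfile b x = sharpProfile b b + ∫ t in b..x, (t - b) := by
  rw [intervalIntegral.integral_comp_sub_right (fun s => s), integral_id, sharpProfile, sharpProfile]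
  ring

lemma sharpProfile_add_one {b : ℝ} (hb : 0 < b) :
    sharpProfile b (b + 1) = (b / 3 + 1 / 8) / (b + 1 / 2) := by
  unfold sharpProfile
  field_simp
  ring

lemma integral_sharpProfile_mul_id {b : ℝ} (hb : 0 < b) :
    ∫ r in b..b + 1, sharpProfile b r * r = 0 := by
  set C := (b / 6 + 1 / 8) / (b + 1 / 2) with hC
  have h : ∀ r : ℝ, sharpProfile b r * r
      = ((r - b) ^ 3 / 2 + b / 2 * (r - b) ^ 2 - C * (r - b)) - C * b := fun r => by
    rw [sharpProfile]; ring
  simp only [h]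
  simp (disch := exact Continuous.intervalIntegrable (by fun_prop) _ _) only
    [intervalIntegral.integral_add, intervalIntegral.integral_sub, intervalIntegral.integral_const_mul,
    intervalIntegral.integral_div, intervalIntegral.integral_comp_sub_right (fun s => s ^ 3),
    intervalIntegral.integral_comp_sub_right (fun s => s ^ 2),
    intervalIntegral.integral_comp_sub_right (fun s => s)]
  rw [hC]
  field_simp
  norm_num
  ring

lemma integral_sub_sq_mul_id (b : ℝ) : ∫ r in b..b + 1, (r - b) ^ 2 * r = b / 3 + 1 / 4 := by
  have h : ∀ r : ℝ, (r - b) ^ 2 * r = (r - b) ^ 3 + b * (r - b) ^ 2 := fun r => by ring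
  simp (disch := exact Continuous.intervalIntegrable (by fun_prop) _ _) only
    [h, intervalIntegral.integral_add, intervalIntegral.integral_const_mul,
    intervalIntegral.integral_comp_sub_right (fun s => s ^ 3),
    intervalIntegral.integral_comp_sub_right (fun s => s ^ 2)]
  norm_num
  ring

lemma tendsto_sharpProfile_ratio :
    Tendsto (fun b => sharpProfile b (b + 1) ^ 2 * (b + 1) / (b / 3 + 1 / 4)) atTop
      (𝓝 (1 / 3)) := by
  set f : ℝ → ℝ := fun x => ((1 / 3 + x / 8) / (1 + x / 2)) ^ 2 * (1 + x) / (1 / 3 + x / 4)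
  have hf : Tendsto f (𝓝 0) (𝓝 (1 / 3)) := by
    have : ContinuousAt f 0 := by
      simp only [f]; fun_prop (disch := norm_num)
    convert this.tendsto using 2
    norm_num [f]
  refine (hf.comp tendsto_inv_atTop_zero).congr' ?_
  filter_upwards [eventually_gt_atTop 0] with b hb
  simp only [Function.comp, f, sharpProfile_add_one hb]
  field_simp

theorem poincare_sobolev_constant_sharp (S : ℝ) (hS : S < 1 / 3) :
    ∃ b : ℝ, 0 < b ∧ ∃ v g : ℝ → ℝ,
      ContinuousOn v (Set.Icc b (b + 1)) ∧
      MeasureTheory.IntegrableOn (fun t => g t ^ 2) (Set.Ioo b (b + 1)) ∧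
      (∀ x ∈ Set.Icc b (b + 1), v x = v b + ∫ t in b..x, g t) ∧
      (∫ r in b..(b + 1), v r * r) = 0 ∧
      ∃ r ∈ Set.Icc b (b + 1),
        v r ^ 2 * r > S * ∫ r in b..(b + 1), (g r) ^ 2 * r := by
  obtain ⟨b, hS_lt, hb⟩ :=
    ((tendsto_sharpProfile_ratio.eventually (lt_mem_nhds hS)).and (eventually_gt_atTop 0)).exists
  refine ⟨b, hb, sharpProfile b, fun r => r - b, (continuous_sharpProfile _).continuousOn,
    ?_, fun x _ => sharpProfile_eq_add_integral b x, integral_sharpProfile_mul_id hb,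
    b + 1, ⟨by linarith, le_rfl⟩, ?_⟩
  · exact (Continuous.integrableOn_Icc (by fun_prop)).mono_set Ioo_subset_Icc_self
  · rw [integral_sub_sq_mul_id]
    exact (lt_div_iff₀ (by positivity)).mp hS_lt
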